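/- arXiv:2503.21642 — 5 statements merged into one kernel-verified Lean document; each statement's English description precedes it below -/
import Mathlib

section
/- Let g ≥ 2 and τ = (τ_{ij}) ∈ M_g(ℂ) with det(Im τ) ≠ 0. If [F_τ : ℚ] = 4, then g ≤ ρ(τ) < g². -/
open Matrix Module IntermediateField
open scoped ComplexOrder

noncomputable section

/-- The period matrix `Π(τ) = (τ | I_g)`, a `g × 2g` complex matrix. -/
def PeriodMatrix (g : ℕ) (τ : Matrix (Fin g) (Fin g) ℂ) :
    Matrix (Fin g) (Fin g ⊕ Fin g) ℂ :=
  Matrix.fromCols τ 1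

/-- `F_τ`: the subfield of `ℂ` generated over `ℚ` by the entries of `τ`. -/
def EntryField (g : ℕ) (τ : Matrix (Fin g) (Fin g) ℂ) : IntermediateField ℚ ℂ :=
  IntermediateField.adjoin ℚ {x : ℂ | ∃ i j, τ i j = x}

/-- Entrywise inclusion `ℚ → ℂ` on square matrices, as an algebra homomorphism. -/
def mapQC (g : ℕ) : Matrix (Fin g) (Fin g) ℚ →ₐ[ℚ] Matrix (Fin g) (Fin g) ℂ :=
  (Algebra.ofId ℚ ℂ).mapMatrix

/-- The ℚ-vector space `N(τ)` of triples `(A,B,C)` of rational `g × g` matrices with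
`A, C` skew-symmetric and `A - Bτ + τᵗBᵗ + τᵗCτ = 0`; its dimension is the Picard
number of the complex torus `X_τ`. -/
def NSSpace (g : ℕ) (τ : Matrix (Fin g) (Fin g) ℂ) :
    Submodule ℚ (Matrix (Fin g) (Fin g) ℚ × Matrix (Fin g) (Fin g) ℚ ×
      Matrix (Fin g) (Fin g) ℚ) where
  carrier := {x | x.1ᵀ = -x.1 ∧ x.2.2ᵀ = -x.2.2 ∧
    mapQC g x.1 - mapQC g x.2.1 * τ + τᵀ * (mapQC g x.2.1)ᵀ + τᵀ * mapQC g x.2.2 * τ = 0}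
  add_mem' := by
    rintro a b ⟨ha1, ha2, ha3⟩ ⟨hb1, hb2, hb3⟩
    refine ⟨by simp [Matrix.transpose_add, ha1, hb1]; abel,
      by simp [Matrix.transpose_add, ha2, hb2]; abel, ?_⟩
    have key : mapQC g (a + b).1 - mapQC g (a + b).2.1 * τ + τᵀ * (mapQC g (a + b).2.1)ᵀ
        + τᵀ * mapQC g (a + b).2.2 * τ
        = (mapQC g a.1 - mapQC g a.2.1 * τ + τᵀ * (mapQC g a.2.1)ᵀ + τᵀ * mapQC g a.2.2 * τ)
        + (mapQC g b.1 - mapQC g b.2.1 * τ + τᵀ * (mapQC g b.2.1)ᵀ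
          + τᵀ * mapQC g b.2.2 * τ) := by
      simp only [Prod.fst_add, Prod.snd_add, map_add, Matrix.add_mul, Matrix.mul_add,
        Matrix.transpose_add]
      abel
    rw [key, ha3, hb3, add_zero]
  zero_mem' := by
    refine ⟨by simp, by simp, ?_⟩
    simp
  smul_mem' := by
    rintro q a ⟨ha1, ha2, ha3⟩
    refine ⟨by simp [Matrix.transpose_smul, ha1], by simp [Matrix.transpose_smul, ha2], ?_⟩
    have key : mapQC g (q • a).1 - mapQC g (q • a).2.1 * τ + τᵀ * (mapQC g (q • a).2.1)ᵀ
        + τᵀ * mapQC g (q • a).2.2 * τ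
        = q • (mapQC g a.1 - mapQC g a.2.1 * τ + τᵀ * (mapQC g a.2.1)ᵀ
          + τᵀ * mapQC g a.2.2 * τ) := by
      simp only [Prod.smul_fst, Prod.smul_snd, _root_.map_smul, Matrix.transpose_smul,
        smul_mul_assoc, mul_smul_comm]
      module
    rw [key, ha3, smul_zero]

/-- The Picard number `ρ(τ) = dim_ℚ N(τ)` of the complex torus `X_τ`. -/
def picard (g : ℕ) (τ : Matrix (Fin g) (Fin g) ℂ) : ℕ :=
  Module.finrank ℚ (NSSpace g τ)

/-!
Lower bound: inside the `3g²`-dimensional space of rational triples, `N(τ)` is cut out by the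
`g(g+1)` rational conditions making `A` and `C` skew and by the vanishing of the strict upper
triangle of the (then skew) relation matrix, whose `g(g-1)/2` entries lie in `F_τ` and so amount
to `4 · g(g-1)/2` rational conditions; hence `ρ ≥ 3g² - g(g+1) - 2g(g-1) = g`.

Upper bound: writing `J` for the alternating `2g × 2g` matrix of `(A, B, C)` and `R_u = (uᵀ | 1)`,
the relation for `u` reads `R_u J R_uᵀ = 0`, and every embedding `s : F_τ → ℂ` turns a rational
solution for `τ` into one for `s(τ)`. Use `τ`, `τ̄` and a third conjugate `μ`. As `det Im τ ≠ 0`,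
`R_τ` and `R_τ̄` stack to an invertible matrix, so `J` is determined by `X = R_τ J R_τ̄ᵀ`. Writing
`R_μ = U R_τ + (1 - U) R_τ̄`, the relation for `μ` becomes `U X (1 - U)ᵀ = (1 - U) Xᵀ Uᵀ`, a
nontrivial linear condition on `X` because `μ ≠ τ, τ̄`. So the complex solutions form a space of
dimension `< g²`, and `ℚ`-independent rational triples stay `ℂ`-independent.
-/

abbrev MatrixTriple (n R : Type*) := Matrix n n R × Matrix n n R × Matrix n n R

section Relation

variable {n R S : Type*} [CommRing R] [CommRing S]

def altMatrix : MatrixTriple n R →ₗ[R] Matrix (n ⊕ n) (n ⊕ n) R where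
  toFun x := fromBlocks x.2.2 x.2.1ᵀ (-x.2.1) x.1
  map_add' x y := by simp [fromBlocks_add, add_comm]
  map_smul' c x := by simp [fromBlocks_smul]

theorem altMatrix_apply (x : MatrixTriple n R) :
    altMatrix x = fromBlocks x.2.2 x.2.1ᵀ (-x.2.1) x.1 :=
  rfl

theorem altMatrix_eq_zero_iff {x : MatrixTriple n R} : altMatrix x = 0 ↔ x = 0 := by
  rw [altMatrix_apply, ← fromBlocks_zero, fromBlocks_inj, neg_eq_zero]
  simp only [Prod.ext_iff, Prod.fst_zero, Prod.snd_zero, transpose_eq_zero]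
  tauto

def tripleMap (f : R →+* S) (x : MatrixTriple n R) : MatrixTriple n S :=
  (x.1.map f, x.2.1.map f, x.2.2.map f)

theorem altMatrix_tripleMap (f : R →+* S) (x : MatrixTriple n R) :
    altMatrix (tripleMap f x) = (altMatrix x).map f := by
  ext (i | i) (j | j) <;> simp [altMatrix_apply, tripleMap]

theorem transpose_map_eq_neg (f : R →+* S) {A : Matrix n n R} (hA : Aᵀ = -A) :
    (A.map f)ᵀ = -A.map f := by
  rw [← transpose_map, hA, Matrix.map_neg _ (map_neg f)]

variable [Fintype n] [DecidableEq n]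

def augment (u : Matrix n n R) : Matrix n (n ⊕ n) R := fromCols uᵀ 1

def nsRelation (u v : Matrix n n R) : MatrixTriple n R →ₗ[R] Matrix n n R where
  toFun x := augment u * altMatrix x * (augment v)ᵀ
  map_add' x y := by rw [map_add, Matrix.mul_add, Matrix.add_mul]
  map_smul' c x := by rw [map_smul, Matrix.mul_smul, Matrix.smul_mul]; rfl

theorem nsRelation_apply (u v : Matrix n n R) (x : MatrixTriple n R) :
    nsRelation u v x = x.1 - x.2.1 * v + uᵀ * x.2.1ᵀ + uᵀ * x.2.2 * v := by
  change augment u * altMatrix x * (augment v)ᵀ = _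
  simp only [augment, altMatrix_apply, transpose_fromCols, fromCols_mul_fromBlocks,
    fromCols_mul_fromRows, transpose_transpose, transpose_one]
  noncomm_ring

theorem nsRelation_transpose (u v : Matrix n n R) {x : MatrixTriple n R} (hA : x.1ᵀ = -x.1)
    (hC : x.2.2ᵀ = -x.2.2) : (nsRelation u v x)ᵀ = -nsRelation v u x := by
  simp only [nsRelation_apply, transpose_add, transpose_sub, transpose_mul, transpose_transpose,
    hA, hC]
  noncomm_ring

theorem nsRelation_tripleMap (f : R →+* S) (u v : Matrix n n R) (x : MatrixTriple n R) :
    nsRelation (u.map f) (v.map f) (tripleMap f x) = (nsRelation u v x).map f := by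
  simp [nsRelation_apply, tripleMap, Matrix.map_mul, Matrix.map_add, Matrix.map_sub,
    transpose_map]

theorem fromRows_mul_altMatrix_mul_transpose (u v : Matrix n n R) (x : MatrixTriple n R) :
    fromRows (augment u) (augment v) * altMatrix x * (fromRows (augment u) (augment v))ᵀ =
      fromBlocks (nsRelation u u x) (nsRelation u v x) (nsRelation v u x) (nsRelation v v x) := by
  rw [transpose_fromRows, fromRows_mul, fromRows_mul, mul_fromCols, mul_fromCols,
    fromRows_fromCols_eq_fromBlocks]
  rfl

theorem nsRelation_of_transpose_eq {τ σ μ U V : Matrix n n R} (hUV : U + V = 1)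
    (hμ : μᵀ = U * τᵀ + V * σᵀ) (x : MatrixTriple n R) :
    nsRelation μ μ x = U * nsRelation τ τ x * Uᵀ + U * nsRelation τ σ x * Vᵀ +
      V * nsRelation σ τ x * Uᵀ + V * nsRelation σ σ x * Vᵀ := by
  have hrow : augment μ = U * augment τ + V * augment σ := by
    rw [augment, augment, augment, mul_fromCols, mul_fromCols, Matrix.mul_one, Matrix.mul_one,
      hμ, ← hUV]
    ext i (j | j) <;> simp
  change augment μ * altMatrix x * (augment μ)ᵀ = _
  rw [hrow]
  simp only [nsRelation, LinearMap.coe_mk, AddHom.coe_mk, transpose_add, transpose_mul,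
    Matrix.add_mul, Matrix.mul_add, Matrix.mul_assoc]
  abel

end Relation

section Field

variable {n K : Type*} [Field K]

theorem mem_span_singleton_of_vecMulVec_eq {p q : n → K} (hq : q ≠ 0)
    (h : vecMulVec p q = vecMulVec q p) : p ∈ K ∙ q := by
  obtain ⟨j, hj⟩ := Function.ne_iff.mp hq
  refine Submodule.mem_span_singleton.mpr ⟨p j / q j, funext fun i => ?_⟩
  have hij := congrFun (congrFun h i) j
  simp only [vecMulVec_apply, Pi.smul_apply, smul_eq_mul, Pi.zero_apply] at hij hj ⊢
  field_simp
  linear_combination -hij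

variable [Fintype n] [DecidableEq n]

def nsSolutions (T : Set (Matrix n n K)) : Submodule K (MatrixTriple n K) where
  carrier := {x | x.1ᵀ = -x.1 ∧ x.2.2ᵀ = -x.2.2 ∧ ∀ u ∈ T, nsRelation u u x = 0}
  add_mem' {x y} hx hy := by
    refine ⟨?_, ?_, fun u hu => ?_⟩
    · simp [transpose_add, hx.1, hy.1, add_comm]
    · simp [transpose_add, hx.2.1, hy.2.1, add_comm]
    · rw [map_add, hx.2.2 u hu, hy.2.2 u hu, add_zero]
  zero_mem' := by simp
  smul_mem' c x hx := by
    refine ⟨?_, ?_, fun u hu => ?_⟩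
    · simp [transpose_smul, hx.1]
    · simp [transpose_smul, hx.2.1]
    · rw [map_smul, hx.2.2 u hu, smul_zero]

theorem eq_zero_of_nsRelation_eq_zero {u v : Matrix n n K} (huv : IsUnit (u - v).det)
    {x : MatrixTriple n K} (hA : x.1ᵀ = -x.1) (hC : x.2.2ᵀ = -x.2.2)
    (h₁ : nsRelation u u x = 0) (h₂ : nsRelation u v x = 0) (h₃ : nsRelation v v x = 0) :
    x = 0 := by
  have hP : IsUnit (fromRows (augment u) (augment v)) := by
    rw [isUnit_iff_isUnit_det, augment, augment, fromRows_fromCols_eq_fromBlocks,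
      det_fromBlocks_one₂₂, Matrix.one_mul, ← transpose_sub, det_transpose]
    exact huv
  have hvu : nsRelation v u x = 0 := by
    rw [← neg_eq_zero, ← nsRelation_transpose u v hA hC, h₂, transpose_zero]
  have hJ : fromRows (augment u) (augment v) *
      (altMatrix x * (fromRows (augment u) (augment v))ᵀ) = 0 := by
    rw [← Matrix.mul_assoc, fromRows_mul_altMatrix_mul_transpose, h₁, h₂, hvu, h₃,
      fromBlocks_zero]
  rwa [hP.mul_right_eq_zero, ((isUnit_transpose _).mpr hP).mul_left_eq_zero,
    altMatrix_eq_zero_iff] at hJ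

def skewSandwich (U V : Matrix n n K) : Matrix n n K →ₗ[K] Matrix n n K where
  toFun X := U * X * Vᵀ - V * Xᵀ * Uᵀ
  map_add' X Y := by
    simp only [transpose_add, Matrix.add_mul, Matrix.mul_add]
    abel
  map_smul' c X := by
    simp only [transpose_smul, Matrix.smul_mul, Matrix.mul_smul, RingHom.id_apply, smul_sub]

/- On rank-one matrices `a bᵀ` the map is `(U a)(V b)ᵀ - (V b)(U a)ᵀ`; if it vanished, all of
`U *ᵥ e` and `V *ᵥ e`, hence every `e = U *ᵥ e + V *ᵥ e`, would lie on one line. -/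
theorem skewSandwich_ne_zero [Nontrivial n] {U V : Matrix n n K} (hUV : U + V = 1)
    (hU : U ≠ 0) (hV : V ≠ 0) : skewSandwich U V ≠ 0 := by
  intro hG
  have hsymm (a b : n → K) : vecMulVec (U *ᵥ a) (V *ᵥ b) = vecMulVec (V *ᵥ b) (U *ᵥ a) := by
    have h := LinearMap.congr_fun hG (vecMulVec a b)
    rwa [LinearMap.zero_apply, skewSandwich, LinearMap.coe_mk, AddHom.coe_mk, sub_eq_zero,
      transpose_vecMulVec, mul_vecMulVec, mul_vecMulVec, vecMulVec_mul, vecMulVec_mul,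
      vecMul_transpose, vecMul_transpose] at h
  have exists_mulVec_ne_zero {M : Matrix n n K} (hM : M ≠ 0) : ∃ a, M *ᵥ a ≠ 0 := by
    by_contra! h
    exact hM (ext_of_mulVec_single fun i => by rw [h, zero_mulVec])
  obtain ⟨a, ha⟩ := exists_mulVec_ne_zero hU
  obtain ⟨b, hb⟩ := exists_mulVec_ne_zero hV
  have hUa : K ∙ (U *ᵥ a) ≤ K ∙ (V *ᵥ b) :=
    (Submodule.span_singleton_le_iff_mem _ _).mpr
      (mem_span_singleton_of_vecMulVec_eq hb (hsymm a b))
  have hspan : (⊤ : Submodule K (n → K)) ≤ K ∙ (V *ᵥ b) := by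
    intro e _
    have he : e = U *ᵥ e + V *ᵥ e := by rw [← add_mulVec, hUV, one_mulVec]
    rw [he]
    exact add_mem (mem_span_singleton_of_vecMulVec_eq hb (hsymm e b))
      (hUa (mem_span_singleton_of_vecMulVec_eq ha (hsymm a e).symm))
  have := Submodule.finrank_mono hspan
  rw [finrank_top, finrank_fintype_fun_eq_card, finrank_span_singleton hb] at this
  exact Fintype.one_lt_card.not_ge this

theorem exists_transpose_eq_mul_add_mul {τ σ : Matrix n n K} (hτσ : IsUnit (τ - σ).det)
    (μ : Matrix n n K) :
    ∃ U, μᵀ = U * τᵀ + (1 - U) * σᵀ ∧ (U = 0 → μ = σ) ∧ (U = 1 → μ = τ) := by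
  set U := (μ - σ)ᵀ * (τ - σ)ᵀ⁻¹
  have hU : U * (τ - σ)ᵀ = (μ - σ)ᵀ :=
    nonsing_inv_mul_cancel_right _ _ (by rwa [det_transpose])
  refine ⟨U, ?_, fun h => ?_, fun h => ?_⟩
  · have : μᵀ = U * (τ - σ)ᵀ + σᵀ := by rw [hU, transpose_sub, sub_add_cancel]
    rw [this, transpose_sub]
    noncomm_ring
  · rwa [h, Matrix.zero_mul, eq_comm, transpose_eq_zero, sub_eq_zero] at hU
  · rw [h, Matrix.one_mul] at hU
    exact sub_left_injective (transpose_injective hU).symm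

theorem finrank_nsSolutions_lt [Nontrivial n] {τ σ μ : Matrix n n K}
    (hτσ : IsUnit (τ - σ).det) (hμτ : μ ≠ τ) (hμσ : μ ≠ σ) :
    finrank K (nsSolutions {τ, σ, μ}) < Fintype.card n * Fintype.card n := by
  obtain ⟨U, hμ, hU, hV⟩ := exists_transpose_eq_mul_add_mul hτσ μ
  have hG : skewSandwich U (1 - U) ≠ 0 :=
    skewSandwich_ne_zero (add_sub_cancel U 1) (mt hU hμσ) (sub_ne_zero.mpr (Ne.symm (mt hV hμτ)))
  have hmem (x : nsSolutions {τ, σ, μ}) :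
      nsRelation τ σ x ∈ LinearMap.ker (skewSandwich U (1 - U)) := by
    obtain ⟨hA, hC, h⟩ := x.2
    have h' := nsRelation_of_transpose_eq (add_sub_cancel U 1) hμ x.1
    rw [h μ (by simp), h τ (by simp), h σ (by simp), ← neg_neg (nsRelation σ τ x.1),
      ← nsRelation_transpose τ σ hA hC] at h'
    rw [LinearMap.mem_ker, h']
    simp [skewSandwich, sub_eq_add_neg]
  let φ := LinearMap.codRestrict _ ((nsRelation τ σ).comp (nsSolutions {τ, σ, μ}).subtype) hmem
  have hφ : Function.Injective φ := by
    rw [← LinearMap.ker_eq_bot, Submodule.eq_bot_iff]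
    intro x hx
    obtain ⟨hA, hC, h⟩ := x.2
    exact Subtype.ext (eq_zero_of_nsRelation_eq_zero hτσ hA hC (h τ (by simp))
      (congrArg Subtype.val hx) (h σ (by simp)))
  calc finrank K (nsSolutions {τ, σ, μ})
      ≤ finrank K (LinearMap.ker (skewSandwich U (1 - U))) :=
        LinearMap.finrank_le_finrank_of_injective hφ
    _ < finrank K (Matrix n n K) := Submodule.finrank_lt (by rwa [Ne, LinearMap.ker_eq_top])
    _ = Fintype.card n * Fintype.card n := by simp [finrank_matrix]

end Field

section BaseChange

variable {n K L : Type*} [Field K] [Field L] [Algebra K L]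

def altEntries {R : Type*} [CommRing R] : MatrixTriple n R →ₗ[R] ((n ⊕ n) × (n ⊕ n) → R) :=
  LinearMap.pi fun p => entryLinearMap R R p.1 p.2 ∘ₗ altMatrix

theorem altEntries_injective {R : Type*} [CommRing R] :
    Function.Injective (altEntries : MatrixTriple n R → _) := by
  rw [← LinearMap.ker_eq_bot, Submodule.eq_bot_iff]
  intro x hx
  rw [← altMatrix_eq_zero_iff]
  ext i j
  exact congrFun hx (i, j)

theorem altEntries_tripleMap {R S : Type*} [CommRing R] [CommRing S] (f : R →+* S)
    (x : MatrixTriple n R) : altEntries (tripleMap f x) = f ∘ altEntries x := by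
  ext p
  simp [altEntries, altMatrix_tripleMap]

variable (K L) in
def tripleBaseChange : MatrixTriple n K →ₗ[K] MatrixTriple n L where
  toFun := tripleMap (algebraMap K L)
  map_add' x y := by ext <;> simp [tripleMap]
  map_smul' c x := by ext <;> simp [tripleMap, Algebra.smul_def]

variable [Fintype n]

theorem finrank_le_of_tripleBaseChange_mem {W : Submodule K (MatrixTriple n K)}
    {W' : Submodule L (MatrixTriple n L)} (h : ∀ x ∈ W, tripleBaseChange K L x ∈ W') :
    finrank K W ≤ finrank L W' := by
  let b := finBasis K W
  have hb : LinearIndependent K fun i => altEntries (b i : MatrixTriple n K) :=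
    (b.linearIndependent.map' W.subtype W.ker_subtype).map' altEntries
      (LinearMap.ker_eq_bot.mpr altEntries_injective)
  have hb' : LinearIndependent L fun i => tripleMap (algebraMap K L) (b i : MatrixTriple n K) := by
    refine LinearIndependent.of_comp altEntries ?_
    have h := (linearIndependent_algebraMap_comp_iff (R := K) (S := L)).mpr hb
    simp only [← altEntries_tripleMap] at h
    exact h
  have hv : LinearIndependent L fun i => (⟨_, h _ (b i).2⟩ : W') :=
    LinearIndependent.of_comp W'.subtype hb'
  simpa using hv.fintype_card_le_finrank

variable [DecidableEq n]

variable (K) in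
def rationalNSSpace (τ : Matrix n n L) : Submodule K (MatrixTriple n K) where
  carrier := {x | x.1ᵀ = -x.1 ∧ x.2.2ᵀ = -x.2.2 ∧ nsRelation τ τ (tripleBaseChange K L x) = 0}
  add_mem' {x y} hx hy := by
    refine ⟨?_, ?_, ?_⟩
    · simp [transpose_add, hx.1, hy.1, add_comm]
    · simp [transpose_add, hx.2.1, hy.2.1, add_comm]
    · rw [map_add, map_add, hx.2.2, hy.2.2, add_zero]
  zero_mem' := by simp
  smul_mem' c x hx := by
    refine ⟨?_, ?_, ?_⟩
    · simp [transpose_smul, hx.1]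
    · simp [transpose_smul, hx.2.1]
    · rw [map_smul, (nsRelation τ τ).map_smul_of_tower, hx.2.2, smul_zero]

end BaseChange

section Counting

open Fintype

theorem card_le_add_card_lt (α : Type*) [Fintype α] [LinearOrder α] :
    card {p : α × α | p.1 ≤ p.2} + card {p : α × α | p.1 < p.2} = card α * card α := by
  have hswap : card {p : α × α | p.1 < p.2} = card {p : α × α // ¬ p.1 ≤ p.2} :=
    card_congr ((Equiv.prodComm α α).subtypeEquiv fun p => by simp)
  rw [hswap, card_subtype_compl, ← card_prod]
  simp only [Set.coe_ofPred]
  have := card_subtype_le fun p : α × α => p.1 ≤ p.2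
  omega

theorem card_le_eq_card_lt_add (α : Type*) [Fintype α] [LinearOrder α] :
    card {p : α × α | p.1 ≤ p.2} = card {p : α × α | p.1 < p.2} + card α := by
  have hdiag : card {p : α × α | p.1 = p.2} = card α :=
    card_congr ⟨fun p => p.1.1, fun a => ⟨(a, a), rfl⟩, fun p => by aesop, fun a => rfl⟩
  rw [← hdiag]
  simp only [Set.coe_ofPred, le_iff_lt_or_eq]
  exact card_subtype_or_disjoint _ _ fun p hlt heq x hx => (hlt x hx).ne (heq x hx)

end Counting

theorem Matrix.eq_zero_of_transpose_eq_of_le {n α : Type*} [LinearOrder n] [Zero α]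
    {M : Matrix n n α} (hM : Mᵀ = M) (h : ∀ i j, i ≤ j → M i j = 0) : M = 0 := by
  ext i j
  rcases le_total i j with hij | hji
  · exact h i j hij
  · rw [← hM, transpose_apply]
    exact h j i hji

theorem Matrix.eq_zero_of_transpose_eq_neg_of_lt {n α : Type*} [LinearOrder n] [AddGroup α]
    [IsAddTorsionFree α] {M : Matrix n n α} (hM : Mᵀ = -M) (h : ∀ i j, i < j → M i j = 0) :
    M = 0 := by
  ext i j
  have hij := congrFun (congrFun hM j) i
  rw [transpose_apply, neg_apply] at hij
  rw [zero_apply]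
  rcases lt_trichotomy i j with hlt | rfl | hgt
  · exact h i j hlt
  · exact self_eq_neg.mp hij
  · rw [hij, h j i hgt, neg_zero]

section RationalNS

variable {n K L L' : Type*} [Fintype n] [DecidableEq n] [Field K] [Field L] [Field L']
  [Algebra K L] [Algebra K L']

theorem nsRelation_map_tripleBaseChange (s : L →ₐ[K] L') (τ : Matrix n n L)
    (x : MatrixTriple n K) :
    nsRelation (τ.map s) (τ.map s) (tripleBaseChange K L' x) =
      (nsRelation τ τ (tripleBaseChange K L x)).map s := by
  have : tripleBaseChange K L' x = tripleMap s.toRingHom (tripleBaseChange K L x) := by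
    ext <;> simp [tripleBaseChange, tripleMap]
  rw [this]
  exact nsRelation_tripleMap s.toRingHom τ τ _

theorem nsRelation_map_eq_zero (s : L →ₐ[K] L') {τ : Matrix n n L} {x : MatrixTriple n K}
    (hx : x ∈ rationalNSSpace K τ) :
    nsRelation (τ.map s) (τ.map s) (tripleBaseChange K L' x) = 0 := by
  rw [nsRelation_map_tripleBaseChange, hx.2.2, Matrix.map_zero _ (map_zero s)]

theorem tripleBaseChange_mem_nsSolutions {τ : Matrix n n L} {x : MatrixTriple n K}
    (hx : x ∈ rationalNSSpace K τ) {T : Set (Matrix n n L')}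
    (hT : ∀ u ∈ T, ∃ s : L →ₐ[K] L', τ.map s = u) : tripleBaseChange K L' x ∈ nsSolutions T :=
  ⟨transpose_map_eq_neg _ hx.1, transpose_map_eq_neg _ hx.2.1, fun u hu => by
    obtain ⟨s, rfl⟩ := hT u hu
    exact nsRelation_map_eq_zero s hx⟩

theorem rationalNSSpace_map_of_injective (s : L →ₐ[K] L') (hs : Function.Injective s)
    (τ : Matrix n n L) : rationalNSSpace K (τ.map s) = rationalNSSpace K τ := by
  ext x
  refine ⟨fun ⟨hA, hC, h⟩ => ⟨hA, hC, ?_⟩,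
    fun hx => ⟨hx.1, hx.2.1, nsRelation_map_eq_zero s hx⟩⟩
  rw [nsRelation_map_tripleBaseChange] at h
  exact Matrix.map_injective hs (h.trans (Matrix.map_zero _ (map_zero s)).symm)

variable [LinearOrder n]

/- Once `A` and `C` are skew, so is the relation matrix: its strict upper triangle suffices. -/
variable (K) in
def nsEquations (τ : Matrix n n L) :
    MatrixTriple n K →ₗ[K] ({p : n × n | p.1 ≤ p.2} → K) × ({p : n × n | p.1 ≤ p.2} → K) ×
      ({p : n × n | p.1 < p.2} → L) where
  toFun x := (fun p => (x.1 + x.1ᵀ) p.1.1 p.1.2, fun p => (x.2.2 + x.2.2ᵀ) p.1.1 p.1.2,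
    fun p => nsRelation τ τ (tripleBaseChange K L x) p.1.1 p.1.2)
  map_add' x y := by
    ext p <;> simp only [Prod.fst_add, Prod.snd_add, transpose_add, map_add, Matrix.add_apply,
      Pi.add_apply, Prod.mk_add_mk] <;> abel
  map_smul' c x := by
    ext p <;> simp [transpose_smul, mul_add]

theorem ker_nsEquations [CharZero L] (τ : Matrix n n L) :
    LinearMap.ker (nsEquations K τ) = rationalNSSpace K τ := by
  have skew_iff (A : Matrix n n K) : Aᵀ = -A ↔ ∀ i j, i ≤ j → (A + Aᵀ) i j = 0 := by
    rw [eq_neg_iff_add_eq_zero, add_comm]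
    refine ⟨fun h i j _ => by rw [h, Matrix.zero_apply], fun h => ?_⟩
    exact eq_zero_of_transpose_eq_of_le (by rw [transpose_add, transpose_transpose, add_comm]) h
  ext x
  simp only [LinearMap.mem_ker, nsEquations, LinearMap.coe_mk, AddHom.coe_mk,
    Prod.mk_eq_zero, funext_iff, Pi.zero_apply, Subtype.forall, Set.mem_ofPred_eq, Prod.forall]
  rw [← skew_iff, ← skew_iff]
  refine ⟨fun ⟨hA, hC, h⟩ => ⟨hA, hC, ?_⟩,
    fun ⟨hA, hC, h⟩ => ⟨hA, hC, fun i j _ => by rw [h]; rfl⟩⟩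
  exact eq_zero_of_transpose_eq_neg_of_lt
    (nsRelation_transpose τ τ (transpose_map_eq_neg _ hA) (transpose_map_eq_neg _ hC)) h

theorem finrank_rationalNSSpace_ge [CharZero L] [FiniteDimensional K L] (τ : Matrix n n L) :
    3 * (Fintype.card n * Fintype.card n) ≤ finrank K (rationalNSSpace K τ) +
      2 * Fintype.card {p : n × n | p.1 ≤ p.2} +
        finrank K L * Fintype.card {p : n × n | p.1 < p.2} := by
  have hrn := LinearMap.finrank_range_add_finrank_ker (nsEquations K τ)
  have hle := Submodule.finrank_le (LinearMap.range (nsEquations K τ))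
  rw [ker_nsEquations] at hrn
  simp only [finrank_prod, finrank_matrix, finrank_self, finrank_pi, finrank_pi_fintype,
    Finset.sum_const, Finset.card_univ, smul_eq_mul] at hrn hle
  linarith

end RationalNS

theorem isUnit_det_sub_conj {n : Type*} [Fintype n] [DecidableEq n] {τ : Matrix n n ℂ}
    (h : (τ.map Complex.im).det ≠ 0) : IsUnit (τ - τ.map (starRingEnd ℂ)).det := by
  have hτ : τ - τ.map (starRingEnd ℂ) =
      (2 * Complex.I) • Complex.ofRealHom.mapMatrix (τ.map Complex.im) := by
    ext i j
    simp [Complex.sub_conj]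
    ring
  rw [hτ, det_smul, ← RingHom.map_det, isUnit_iff_ne_zero]
  simp [h, Complex.I_ne_zero]

theorem exists_algHom_ne_ne {K E Ω : Type*} [Field K] [Field E] [Field Ω] [Algebra K E]
    [Algebra K Ω] [FiniteDimensional K E] [Algebra.IsSeparable K E] [IsAlgClosed Ω]
    (hE : 2 < finrank K E) (s₁ s₂ : E →ₐ[K] Ω) : ∃ s, s ≠ s₁ ∧ s ≠ s₂ := by
  classical
  have hcard :
      ({s₁, s₂} : Finset (E →ₐ[K] Ω)).card < (Finset.univ : Finset (E →ₐ[K] Ω)).card := by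
    rw [Finset.card_univ, AlgHom.card]
    exact Finset.card_le_two.trans_lt hE
  obtain ⟨s, -, hs⟩ := Finset.exists_mem_notMem_of_card_lt_card hcard
  simp only [Finset.mem_insert, Finset.mem_singleton, not_or] at hs
  exact ⟨s, hs⟩

section EntryField

variable (g : ℕ) (τ : Matrix (Fin g) (Fin g) ℂ)

def entryMatrix : Matrix (Fin g) (Fin g) (EntryField g τ) :=
  Matrix.of fun i j => ⟨τ i j, subset_adjoin _ _ ⟨i, j, rfl⟩⟩

def conjEmbedding : EntryField g τ →ₐ[ℚ] ℂ :=
  (starRingEnd ℂ).toRatAlgHom.comp (EntryField g τ).val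

theorem entryMatrix_map_val : (entryMatrix g τ).map (EntryField g τ).val = τ := rfl

theorem entryMatrix_map_conj :
    (entryMatrix g τ).map (conjEmbedding g τ) = τ.map (starRingEnd ℂ) := rfl

theorem entryMatrix_map_injective {s₁ s₂ : EntryField g τ →ₐ[ℚ] ℂ}
    (h : (entryMatrix g τ).map s₁ = (entryMatrix g τ).map s₂) : s₁ = s₂ :=
  adjoin_algHom_ext ℚ fun _ ⟨i, j, hij⟩ => by
    subst hij
    exact congrFun (congrFun h i) j

theorem NSSpace_eq_rationalNSSpace : NSSpace g τ = rationalNSSpace ℚ (entryMatrix g τ) := by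
  have h := rationalNSSpace_map_of_injective (EntryField g τ).val Subtype.val_injective
    (entryMatrix g τ)
  rw [entryMatrix_map_val] at h
  refine Eq.trans ?_ h
  ext x
  simp only [NSSpace, rationalNSSpace, nsRelation_apply]
  rfl

end EntryField

theorem picard_bounds_of_deg_four
    (g : ℕ) (hg : 2 ≤ g) (τ : Matrix (Fin g) (Fin g) ℂ)
    (him : (τ.map Complex.im).det ≠ 0)
    (hdeg : Module.finrank ℚ (EntryField g τ) = 4) :
    g ≤ picard g τ ∧ picard g τ < g ^ 2 := by
  have : FiniteDimensional ℚ (EntryField g τ) := .of_finrank_pos (by omega)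
  have : Nontrivial (Fin g) := Fin.nontrivial_iff_two_le.mpr hg
  have hρ : picard g τ = finrank ℚ (rationalNSSpace ℚ (entryMatrix g τ)) := by
    rw [picard, NSSpace_eq_rationalNSSpace]
  constructor
  · have hcount := finrank_rationalNSSpace_ge (K := ℚ) (entryMatrix g τ)
    have h₁ := card_le_add_card_lt (Fin g)
    have h₂ := card_le_eq_card_lt_add (Fin g)
    rw [hdeg, ← hρ] at hcount
    simp only [Fintype.card_fin] at hcount h₁ h₂
    linarith
  · obtain ⟨s, hs₁, hs₂⟩ :=
      exists_algHom_ne_ne (by omega) (EntryField g τ).val (conjEmbedding g τ)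
    have hsub (x) (hx : x ∈ rationalNSSpace ℚ (entryMatrix g τ)) : tripleBaseChange ℚ ℂ x ∈
        nsSolutions {τ, τ.map (starRingEnd ℂ), (entryMatrix g τ).map s} :=
      tripleBaseChange_mem_nsSolutions hx <| by
        rintro u (hu | hu | hu) <;> rw [hu]
        exacts [⟨_, entryMatrix_map_val g τ⟩, ⟨_, entryMatrix_map_conj g τ⟩, ⟨s, rfl⟩]
    calc picard g τ
        ≤ finrank ℂ (nsSolutions {τ, τ.map (starRingEnd ℂ), (entryMatrix g τ).map s}) :=
          hρ ▸ finrank_le_of_tripleBaseChange_mem hsub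
      _ < Fintype.card (Fin g) * Fintype.card (Fin g) :=
        finrank_nsSolutions_lt (isUnit_det_sub_conj him)
          (fun h => hs₁ (entryMatrix_map_injective g τ h))
          (fun h => hs₂ (entryMatrix_map_injective g τ h))
      _ = g ^ 2 := by rw [Fintype.card_fin, sq]

end
end

section
/- Let τ = (τ_{ij}) ∈ M_2(ℂ) with det(Im τ) ≠ 0. Then ρ(τ) = 6 − dim_ℚ V, where V is the ℚ-linear span in ℂ of the six numbers 1, τ_{11}, τ_{12}, τ_{21}, τ_{22}, det τ. -/
open Matrix Module IntermediateField
open scoped ComplexOrder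

noncomputable section

/-!
A skew-symmetric `2 × 2` matrix is a multiple of `J = !![0, 1; -1, 0]`, so a triple `(A, B, C)`
with `A, C` skew has six free rational coordinates: `A = a J`, `C = c J` and the four entries
of `B`. Since `τᵀ J τ = det τ • J`, the matrix `A - Bτ + τᵀBᵀ + τᵀCτ` is then `ℓ(v) • J`, where
`ℓ : ℚ⁶ → ℂ` is the `ℚ`-linear form taking the values `1, τ₁₁, τ₁₂, τ₂₁, τ₂₂, det τ` on the
standard basis. Hence `N(τ) ≅ ker ℓ` and `range ℓ = V`, and rank–nullity gives the formula.
-/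

namespace Matrix

def skewUnit (R : Type*) [Ring R] : Matrix (Fin 2) (Fin 2) R := !![0, 1; -1, 0]

theorem skewUnit_transpose (R : Type*) [Ring R] : (skewUnit R)ᵀ = -skewUnit R := by
  ext i j; fin_cases i <;> fin_cases j <;> simp [skewUnit]

theorem skewUnit_ne_zero (R : Type*) [Ring R] [Nontrivial R] : skewUnit R ≠ 0 :=
  fun h => one_ne_zero (congrFun (congrFun h 0) 1)

theorem eq_smul_skewUnit_of_transpose_eq_neg {R : Type*} [Ring R] [NoZeroDivisors R]
    [CharZero R] {A : Matrix (Fin 2) (Fin 2) R} (hA : Aᵀ = -A) : A = A 0 1 • skewUnit R := by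
  have h : ∀ i j, A j i = -A i j := fun i j => congrFun (congrFun hA i) j
  have h00 : A 0 0 = 0 := CharZero.eq_neg_self_iff.mp (h 0 0)
  have h11 : A 1 1 = 0 := CharZero.eq_neg_self_iff.mp (h 1 1)
  ext i j
  fin_cases i <;> fin_cases j <;> simp [skewUnit, h00, h11, h 0 1]

end Matrix

lemma mapQC_apply {g : ℕ} (x : Matrix (Fin g) (Fin g) ℚ) (i j : Fin g) :
    mapQC g x i j = (x i j : ℂ) := rfl

def nsForm (g : ℕ) (τ : Matrix (Fin g) (Fin g) ℂ)
    (x : Matrix (Fin g) (Fin g) ℚ × Matrix (Fin g) (Fin g) ℚ × Matrix (Fin g) (Fin g) ℚ) :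
    Matrix (Fin g) (Fin g) ℂ :=
  mapQC g x.1 - mapQC g x.2.1 * τ + τᵀ * (mapQC g x.2.1)ᵀ + τᵀ * mapQC g x.2.2 * τ

theorem mem_NSSpace_iff {g : ℕ} {τ : Matrix (Fin g) (Fin g) ℂ}
    {x : Matrix (Fin g) (Fin g) ℚ × Matrix (Fin g) (Fin g) ℚ × Matrix (Fin g) (Fin g) ℚ} :
    x ∈ NSSpace g τ ↔ x.1ᵀ = -x.1 ∧ x.2.2ᵀ = -x.2.2 ∧ nsForm g τ x = 0 :=
  Iff.rfl

def periodVector (τ : Matrix (Fin 2) (Fin 2) ℂ) : Fin 6 → ℂ :=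
  ![1, τ 0 0, τ 0 1, τ 1 0, τ 1 1, τ.det]

theorem range_periodVector (τ : Matrix (Fin 2) (Fin 2) ℂ) :
    Set.range (periodVector τ) = {1, τ 0 0, τ 0 1, τ 1 0, τ 1 1, τ.det} := by
  simp only [periodVector, range_cons, range_empty, Set.union_empty, Set.singleton_union]

def skewTriple : (Fin 6 → ℚ) →ₗ[ℚ]
    Matrix (Fin 2) (Fin 2) ℚ × Matrix (Fin 2) (Fin 2) ℚ × Matrix (Fin 2) (Fin 2) ℚ where
  toFun v := (v 0 • skewUnit ℚ, !![-v 2, -v 4; v 1, v 3], v 5 • skewUnit ℚ)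
  map_add' v w := by
    ext i j <;> fin_cases i <;> fin_cases j <;> simp <;> ring
  map_smul' q v := by
    ext i j <;> fin_cases i <;> fin_cases j <;> simp [smul_smul]

def skewCoords
    (x : Matrix (Fin 2) (Fin 2) ℚ × Matrix (Fin 2) (Fin 2) ℚ × Matrix (Fin 2) (Fin 2) ℚ) :
    Fin 6 → ℚ :=
  ![x.1 0 1, x.2.1 1 0, -x.2.1 0 0, x.2.1 1 1, -x.2.1 0 1, x.2.2 0 1]

theorem skewCoords_skewTriple (v : Fin 6 → ℚ) : skewCoords (skewTriple v) = v := by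
  funext i
  fin_cases i <;> simp [skewCoords, skewTriple, skewUnit]

theorem skewTriple_skewCoords
    {x : Matrix (Fin 2) (Fin 2) ℚ × Matrix (Fin 2) (Fin 2) ℚ × Matrix (Fin 2) (Fin 2) ℚ}
    (hA : x.1ᵀ = -x.1) (hC : x.2.2ᵀ = -x.2.2) : skewTriple (skewCoords x) = x := by
  obtain ⟨A, B, C⟩ := x
  refine Prod.ext ?_ (Prod.ext ?_ ?_)
  · exact (eq_smul_skewUnit_of_transpose_eq_neg hA).symm
  · ext i j; fin_cases i <;> fin_cases j <;> simp [skewTriple, skewCoords]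
  · exact (eq_smul_skewUnit_of_transpose_eq_neg hC).symm

theorem nsForm_skewTriple (τ : Matrix (Fin 2) (Fin 2) ℂ) (v : Fin 6 → ℚ) :
    nsForm 2 τ (skewTriple v) =
      Fintype.linearCombination ℚ (periodVector τ) v • skewUnit ℂ := by
  ext i j
  fin_cases i <;> fin_cases j <;>
    simp [nsForm, skewTriple, skewUnit, mapQC_apply, mul_apply, Fin.sum_univ_succ,
      Fintype.linearCombination_apply, periodVector, det_fin_two, Rat.smul_def] <;> ring

theorem skewTriple_mem_NSSpace_iff (τ : Matrix (Fin 2) (Fin 2) ℂ) (v : Fin 6 → ℚ) :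
    skewTriple v ∈ NSSpace 2 τ ↔ Fintype.linearCombination ℚ (periodVector τ) v = 0 := by
  rw [mem_NSSpace_iff, nsForm_skewTriple, smul_eq_zero_iff_left (skewUnit_ne_zero ℂ)]
  simp [skewTriple, skewUnit_transpose]

theorem NSSpace_two_eq_map (τ : Matrix (Fin 2) (Fin 2) ℂ) :
    NSSpace 2 τ =
      (LinearMap.ker (Fintype.linearCombination ℚ (periodVector τ))).map skewTriple := by
  ext x
  constructor
  · intro hx
    obtain ⟨hA, hC, -⟩ := mem_NSSpace_iff.mp hx
    refine ⟨skewCoords x, ?_, skewTriple_skewCoords hA hC⟩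
    rwa [SetLike.mem_coe, LinearMap.mem_ker, ← skewTriple_mem_NSSpace_iff,
      skewTriple_skewCoords hA hC]
  · rintro ⟨v, hv, rfl⟩
    exact (skewTriple_mem_NSSpace_iff τ v).mpr hv

theorem picard_formula_dim_two_general
    (τ : Matrix (Fin 2) (Fin 2) ℂ) :
    picard 2 τ = 6 - Module.finrank ℚ (Submodule.span ℚ
      ({1, τ 0 0, τ 0 1, τ 1 0, τ 1 1, τ.det} : Set ℂ)) := by
  set L := Fintype.linearCombination ℚ (periodVector τ)
  have hker : picard 2 τ = finrank ℚ (LinearMap.ker L) := by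
    rw [picard, NSSpace_two_eq_map]
    exact (Submodule.equivMapOfInjective _
      (Function.LeftInverse.injective skewCoords_skewTriple) _).finrank_eq.symm
  have hrange : LinearMap.range L = Submodule.span ℚ
      ({1, τ 0 0, τ 0 1, τ 1 0, τ 1 1, τ.det} : Set ℂ) := by
    rw [Fintype.range_linearCombination, range_periodVector]
  have hrank := L.finrank_range_add_finrank_ker
  rw [hrange, finrank_fin_fun] at hrank
  omega

theorem picard_formula_dim_two
    (τ : Matrix (Fin 2) (Fin 2) ℂ)
    (him : (τ.map Complex.im).det ≠ 0) :
    picard 2 τ = 6 - Module.finrank ℚ (Submodule.span ℚ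
      ({1, τ 0 0, τ 0 1, τ 1 0, τ 1 1, τ.det} : Set ℂ)) :=
  picard_formula_dim_two_general τ

end
end

section
/- Let g, h ≥ 1, τ ∈ M_g(ℂ) with det(Im τ) ≠ 0 and σ ∈ M_h(ℂ) with det(Im σ) ≠ 0. Suppose M ∈ M_{h×g}(ℂ) and R ∈ M_{2h×2g}(ℤ) satisfy M·Π(τ) = Π(σ)·R, and suppose M is injective as a ℂ-linear map ℂ^g → ℂ^h (i.e. the corresponding homomorphism X_τ → X_σ has finite kernel). Then every entry of τ lies in F_σ; that is, F_τ ⊆ F_σ, and in particular [F_τ : ℚ] ≤ [F_σ : ℚ]. -/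
/-!
The period relation `M * Π(τ) = Π(σ) * R` says that the blocks `M` and `M * τ` of `M * Π(τ)`
have entries in `F_σ`. Injectivity of `M` over `ℂ` implies injectivity over `F_σ`, so `M` has a
left inverse `N` with entries in `F_σ`, and then `τ = N * (M * τ)` has entries in `F_σ` as well.
-/

open Matrix Module IntermediateField
open scoped ComplexOrder

noncomputable section

namespace Matrix

variable {m n p : Type*}

theorem exists_mul_eq_one_of_mulVec_injective {K : Type*} [Field K] [Fintype m] [Fintype n]
    [DecidableEq n] {A : Matrix m n K} (hA : Function.Injective A.mulVec) :
    ∃ B : Matrix n m K, B * A = 1 := by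
  classical
  obtain ⟨G, hG⟩ := (toLin' A).exists_leftInverse_of_injective (LinearMap.ker_eq_bot.2 hA)
  refine ⟨LinearMap.toMatrix' G, ?_⟩
  simpa [LinearMap.toMatrix'_comp] using congrArg LinearMap.toMatrix' hG

variable {L : Type*} [Field L] {K : Subfield L}

theorem exists_map_subtype_eq {A : Matrix m n L} (hA : ∀ i j, A i j ∈ K) :
    ∃ A' : Matrix m n K, A'.map K.subtype = A :=
  ⟨of fun i j => ⟨A i j, hA i j⟩, rfl⟩

theorem mulVec_injective_of_map_subtype [Fintype n] {A : Matrix m n K}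
    (hA : Function.Injective (A.map K.subtype).mulVec) : Function.Injective A.mulVec := by
  intro v w hvw
  refine K.subtype_injective.comp_left (hA ?_)
  ext i
  rw [← RingHom.map_mulVec, ← RingHom.map_mulVec, hvw]

theorem mem_of_mul_mem_of_mulVec_injective [Fintype m] [Fintype n] {M : Matrix m n L}
    {τ : Matrix n p L} (hinj : Function.Injective M.mulVec) (hM : ∀ i j, M i j ∈ K)
    (hMτ : ∀ i j, (M * τ) i j ∈ K) (i : n) (j : p) : τ i j ∈ K := by
  classical
  obtain ⟨M', rfl⟩ := exists_map_subtype_eq hM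
  obtain ⟨P, hP⟩ := exists_map_subtype_eq hMτ
  obtain ⟨N, hN⟩ := exists_mul_eq_one_of_mulVec_injective (mulVec_injective_of_map_subtype hinj)
  have hτ : τ = (N * P).map K.subtype := by
    rw [Matrix.map_mul, hP, ← Matrix.mul_assoc, ← Matrix.map_mul, hN,
      Matrix.map_one _ (map_zero _) (map_one _), Matrix.one_mul]
  rw [hτ]
  exact ((N * P) i j).2

theorem mul_intCast_mem [Fintype n] {A : Matrix m n L} (hA : ∀ i j, A i j ∈ K)
    (R : Matrix n p ℤ) (i : m) (j : p) :
    (A * R.map (Int.cast : ℤ → L)) i j ∈ K :=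
  sum_mem fun k _ => mul_mem (hA i k) (intCast_mem K _)

end Matrix

theorem mul_periodMatrix {g h : ℕ} (M : Matrix (Fin h) (Fin g) ℂ)
    (τ : Matrix (Fin g) (Fin g) ℂ) :
    M * PeriodMatrix g τ = fromCols (M * τ) M := by
  rw [PeriodMatrix, mul_fromCols, Matrix.mul_one]

theorem periodMatrix_mem_entryField (g : ℕ) (τ : Matrix (Fin g) (Fin g) ℂ) (i : Fin g)
    (j : Fin g ⊕ Fin g) :
    PeriodMatrix g τ i j ∈ EntryField g τ := by
  rcases j with j | j
  · exact subset_adjoin ℚ _ ⟨i, j, rfl⟩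
  · simp only [PeriodMatrix, fromCols_apply_inr, one_apply]
    split_ifs <;> simp

theorem entryField_le_of_finite_kernel_general
    (g h : ℕ)
    (τ : Matrix (Fin g) (Fin g) ℂ) (σ : Matrix (Fin h) (Fin h) ℂ)
    (M : Matrix (Fin h) (Fin g) ℂ) (R : Matrix (Fin h ⊕ Fin h) (Fin g ⊕ Fin g) ℤ)
    (hMR : M * PeriodMatrix g τ = PeriodMatrix h σ * R.map (Int.cast : ℤ → ℂ))
    (hinj : Function.Injective M.mulVecLin) :
    EntryField g τ ≤ EntryField h σ := by
  have hrel : ∀ i c, (M * PeriodMatrix g τ) i c ∈ (EntryField h σ).toSubfield := by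
    rw [hMR]
    exact Matrix.mul_intCast_mem (periodMatrix_mem_entryField h σ) R
  rw [mul_periodMatrix] at hrel
  refine adjoin_le_iff.2 ?_
  rintro _ ⟨i, j, rfl⟩
  exact Matrix.mem_of_mul_mem_of_mulVec_injective hinj (fun i j => hrel i (.inr j))
    (fun i j => hrel i (.inl j)) i j

theorem entryField_le_of_finite_kernel
    (g h : ℕ) (hg : 1 ≤ g) (hh : 1 ≤ h)
    (τ : Matrix (Fin g) (Fin g) ℂ) (σ : Matrix (Fin h) (Fin h) ℂ)
    (hτ : (τ.map Complex.im).det ≠ 0) (hσ : (σ.map Complex.im).det ≠ 0)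
    (M : Matrix (Fin h) (Fin g) ℂ) (R : Matrix (Fin h ⊕ Fin h) (Fin g ⊕ Fin g) ℤ)
    (hMR : M * PeriodMatrix g τ = PeriodMatrix h σ * R.map (Int.cast : ℤ → ℂ))
    (hinj : Function.Injective M.mulVecLin) :
    EntryField g τ ≤ EntryField h σ :=
  entryField_le_of_finite_kernel_general g h τ σ M R hMR hinj

end
end

section
/- Let g, h ≥ 1, τ ∈ M_g(ℂ) with det(Im τ) ≠ 0 and σ ∈ M_h(ℂ) with det(Im σ) ≠ 0. Suppose M ∈ M_{h×g}(ℂ) and R ∈ M_{2h×2g}(ℤ) satisfy M·Π(τ) = Π(σ)·R, and suppose M is surjective as a ℂ-linear map ℂ^g → ℂ^h (i.e. the corresponding homomorphism X_τ → X_σ is surjective). Then every entry of σ lies in F_τ; that is, F_σ ⊆ F_τ, and in particular [F_σ : ℚ] ≤ [F_τ : ℚ]. -/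
/-!
Write `R = (A B; C D)` in blocks. The relation `M Π(τ) = Π(σ) R` says `M τ = σ A + C` and
`M = σ B + D`, hence `σ (A - B τ) = D τ - C`. Subtracting this from the complex conjugate
relation gives `(σ̄ - σ) (A - B τ) = M̄ (τ̄ - τ)`; as `σ̄ - σ = -2i Im σ` and `τ̄ - τ` are
invertible and `M̄` is surjective, so is `A - B τ`. Its entries lie in `F_τ`, and surjectivity of
a matrix does not depend on the field over which it is considered, so `A - B τ` has a right
inverse `X` over `F_τ`, and `σ = (D τ - C) X` has entries in `F_τ`.
-/

open Matrix Module IntermediateField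
open scoped ComplexOrder

noncomputable section

namespace Matrix

variable {l m n : Type*}

section SetMatrix

variable {R S : Type*} [Ring R] [SetLike S R] [SubringClass S R] {s : S}

theorem sub_mem_matrix {A B : Matrix m n R} (hA : A ∈ (s : Set R).matrix)
    (hB : B ∈ (s : Set R).matrix) : A - B ∈ (s : Set R).matrix :=
  fun i j => sub_mem (hA i j) (hB i j)

theorem mul_mem_matrix [Fintype m] {A : Matrix l m R} {B : Matrix m n R}
    (hA : A ∈ (s : Set R).matrix) (hB : B ∈ (s : Set R).matrix) : A * B ∈ (s : Set R).matrix :=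
  fun i j => sum_mem fun k _ => mul_mem (hA i k) (hB k j)

end SetMatrix

variable [Fintype m] [Fintype n]

theorem mulVec_map_surjective [DecidableEq m] {R S : Type*} [CommSemiring R] [CommSemiring S]
    (f : R →+* S) {A : Matrix m n R} (hA : Function.Surjective A.mulVec) :
    Function.Surjective (A.map f).mulVec := by
  obtain ⟨B, hB⟩ := mulVec_surjective_iff_exists_right_inverse.1 hA
  refine mulVec_surjective_iff_exists_right_inverse.2 ⟨B.map f, ?_⟩
  rw [← Matrix.map_mul, hB, Matrix.map_one _ f.map_zero f.map_one]

theorem mulVec_surjective_iff_linearIndependent_row {K : Type*} [Field K] (A : Matrix m n K) :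
    Function.Surjective A.mulVec ↔ LinearIndependent K A.row := by
  rw [linearIndependent_iff_card_eq_finrank_span, Set.finrank, ← rank_eq_finrank_span_row,
    rank, ← coe_mulVecLin, ← LinearMap.range_eq_top, Submodule.eq_top_iff_finrank_eq,
    finrank_fintype_fun_eq_card, eq_comm]

theorem mulVec_map_algebraMap_surjective_iff {K L : Type*} [Field K] [Field L] [Algebra K L]
    (A : Matrix m n K) :
    Function.Surjective (A.map (algebraMap K L)).mulVec ↔ Function.Surjective A.mulVec := by
  rw [mulVec_surjective_iff_linearIndependent_row, mulVec_surjective_iff_linearIndependent_row]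
  exact linearIndependent_algebraMap_comp_iff

theorem mem_matrix_of_mul_mem_matrix [DecidableEq m] {L : Type*} [Field L] {K : Subfield L}
    {S : Matrix l m L} {N : Matrix m n L} (hN : Function.Surjective N.mulVec)
    (hNK : N ∈ (K : Set L).matrix) (hSN : S * N ∈ (K : Set L).matrix) :
    S ∈ (K : Set L).matrix := by
  let Nk : Matrix m n K := of fun i j => ⟨N i j, hNK i j⟩
  have hNk : Nk.map (algebraMap K L) = N := rfl
  obtain ⟨X, hX⟩ := mulVec_surjective_iff_exists_right_inverse.1
    ((mulVec_map_algebraMap_surjective_iff Nk).1 (hNk ▸ hN))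
  have hS : S = S * N * X.map (algebraMap K L) := by
    rw [Matrix.mul_assoc, ← hNk, ← Matrix.map_mul, hX, Matrix.map_one _ (map_zero _) (map_one _),
      Matrix.mul_one]
  rw [hS]
  exact mul_mem_matrix hSN fun i j => (X i j).2

theorem mulVec_surjective_of_mul_eq_mul [DecidableEq m] [DecidableEq n] {R : Type*} [CommRing R]
    {P : Matrix m m R} {N Q : Matrix m n R} {T : Matrix n n R} (hPNQT : P * N = Q * T)
    (hP : IsUnit P.det) (hT : IsUnit T.det) (hQ : Function.Surjective Q.mulVec) :
    Function.Surjective N.mulVec := by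
  have hN : N = P⁻¹ * Q * T := by
    rw [Matrix.mul_assoc, ← hPNQT, ← Matrix.mul_assoc, nonsing_inv_mul _ hP, Matrix.one_mul]
  have hcomp : N.mulVec = P⁻¹.mulVec ∘ Q.mulVec ∘ T.mulVec := by
    ext v : 1
    simp only [hN, Function.comp_apply, mulVec_mulVec, Matrix.mul_assoc]
  rw [hcomp]
  have hP' : IsUnit P⁻¹ := isUnit_nonsing_inv_iff.2 ((isUnit_iff_isUnit_det P).2 hP)
  have hT' : IsUnit T := (isUnit_iff_isUnit_det T).2 hT
  exact (mulVec_surjective_iff_isUnit.2 hP').comp (hQ.comp (mulVec_surjective_iff_isUnit.2 hT'))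

end Matrix

variable {g h : ℕ}

theorem mul_periodMatrix_eq_iff {τ : Matrix (Fin g) (Fin g) ℂ} {σ : Matrix (Fin h) (Fin h) ℂ}
    {M : Matrix (Fin h) (Fin g) ℂ} {R : Matrix (Fin h ⊕ Fin h) (Fin g ⊕ Fin g) ℂ} :
    M * PeriodMatrix g τ = PeriodMatrix h σ * R ↔
      M * τ = σ * R.toBlocks₁₁ + R.toBlocks₂₁ ∧ M = σ * R.toBlocks₁₂ + R.toBlocks₂₂ := by
  conv_lhs => rw [PeriodMatrix, PeriodMatrix, ← fromBlocks_toBlocks R, mul_fromCols,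
    fromCols_mul_fromBlocks, fromCols_ext_iff]
  simp only [Matrix.mul_one, Matrix.one_mul]

theorem periodMatrix_map (f : ℂ →+* ℂ) (τ : Matrix (Fin g) (Fin g) ℂ) :
    (PeriodMatrix g τ).map f = PeriodMatrix g (τ.map f) := by
  rw [PeriodMatrix, PeriodMatrix, fromCols_map, Matrix.map_one _ f.map_zero f.map_one]

theorem mul_sub_mul_eq_of_mul_periodMatrix_eq {τ : Matrix (Fin g) (Fin g) ℂ}
    {σ : Matrix (Fin h) (Fin h) ℂ} {M : Matrix (Fin h) (Fin g) ℂ}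
    {R : Matrix (Fin h ⊕ Fin h) (Fin g ⊕ Fin g) ℂ}
    (hMR : M * PeriodMatrix g τ = PeriodMatrix h σ * R) :
    σ * (R.toBlocks₁₁ - R.toBlocks₁₂ * τ) = R.toBlocks₂₂ * τ - R.toBlocks₂₁ := by
  obtain ⟨h₁, h₂⟩ := mul_periodMatrix_eq_iff.1 hMR
  rw [Matrix.mul_sub, ← Matrix.mul_assoc, eq_sub_of_add_eq h₁.symm, eq_sub_of_add_eq h₂.symm,
    Matrix.sub_mul]
  abel

theorem sub_mul_sub_mul_eq_of_mul_periodMatrix_eq {τ τ' : Matrix (Fin g) (Fin g) ℂ}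
    {σ σ' : Matrix (Fin h) (Fin h) ℂ} {M M' : Matrix (Fin h) (Fin g) ℂ}
    {R : Matrix (Fin h ⊕ Fin h) (Fin g ⊕ Fin g) ℂ}
    (hMR : M * PeriodMatrix g τ = PeriodMatrix h σ * R)
    (hMR' : M' * PeriodMatrix g τ' = PeriodMatrix h σ' * R) :
    (σ' - σ) * (R.toBlocks₁₁ - R.toBlocks₁₂ * τ) = M' * (τ' - τ) := by
  obtain ⟨h₁, h₂⟩ := mul_periodMatrix_eq_iff.1 hMR'
  rw [Matrix.sub_mul, mul_sub_mul_eq_of_mul_periodMatrix_eq hMR, Matrix.mul_sub σ',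
    ← Matrix.mul_assoc, eq_sub_of_add_eq h₁.symm, eq_sub_of_add_eq h₂.symm, Matrix.mul_sub,
    Matrix.sub_mul]
  abel

theorem isUnit_det_map_conj_sub {ι : Type*} [Fintype ι] [DecidableEq ι] {τ : Matrix ι ι ℂ}
    (hτ : (τ.map Complex.im).det ≠ 0) : IsUnit (τ.map (starRingEnd ℂ) - τ).det := by
  have hτ' : τ.map (starRingEnd ℂ) - τ =
      (-2 * Complex.I) • (τ.map Complex.im).map Complex.ofRealHom := by
    ext i j
    simp only [Matrix.sub_apply, Matrix.map_apply, Matrix.smul_apply, smul_eq_mul,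
      Complex.ofRealHom_eq_coe]
    rw [← neg_sub, Complex.sub_conj]
    push_cast
    ring
  rw [hτ', Matrix.det_smul, ← RingHom.mapMatrix_apply, ← RingHom.map_det, isUnit_iff_ne_zero]
  exact mul_ne_zero (pow_ne_zero _ (by simp)) (by simpa using hτ)

theorem entryField_ge_of_surjective_general
    (g h : ℕ)
    (τ : Matrix (Fin g) (Fin g) ℂ) (σ : Matrix (Fin h) (Fin h) ℂ)
    (hτ : (τ.map Complex.im).det ≠ 0) (hσ : (σ.map Complex.im).det ≠ 0)
    (M : Matrix (Fin h) (Fin g) ℂ) (R : Matrix (Fin h ⊕ Fin h) (Fin g ⊕ Fin g) ℤ)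
    (hMR : M * PeriodMatrix g τ = PeriodMatrix h σ * R.map (Int.cast : ℤ → ℂ))
    (hsurj : Function.Surjective M.mulVecLin) :
    EntryField h σ ≤ EntryField g τ := by
  set K := EntryField g τ
  set c := starRingEnd ℂ
  set R' := R.map (Int.cast : ℤ → ℂ)
  have hMR_conj : M.map c * PeriodMatrix g (τ.map c) = PeriodMatrix h (σ.map c) * R' := by
    have hR' : R'.map c = R' := by ext; simp [R']
    rw [← periodMatrix_map, ← periodMatrix_map, ← hR', ← Matrix.map_mul, ← Matrix.map_mul, hMR]
  have hN : Function.Surjective (R'.toBlocks₁₁ - R'.toBlocks₁₂ * τ).mulVec :=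
    mulVec_surjective_of_mul_eq_mul (sub_mul_sub_mul_eq_of_mul_periodMatrix_eq hMR hMR_conj)
      (isUnit_det_map_conj_sub hσ) (isUnit_det_map_conj_sub hτ) (mulVec_map_surjective c hsurj)
  have hRK : R' ∈ (K : Set ℂ).matrix := fun i j => intCast_mem K _
  have hτK : τ ∈ (K : Set ℂ).matrix := fun i j => subset_adjoin ℚ _ ⟨i, j, rfl⟩
  have hσK : σ ∈ (K : Set ℂ).matrix := by
    refine mem_matrix_of_mul_mem_matrix (K := K.toSubfield) hN ?_ ?_
    · exact sub_mem_matrix (fun _ _ => hRK _ _) (mul_mem_matrix (fun _ _ => hRK _ _) hτK)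
    · rw [mul_sub_mul_eq_of_mul_periodMatrix_eq hMR]
      exact sub_mem_matrix (mul_mem_matrix (fun _ _ => hRK _ _) hτK) fun _ _ => hRK _ _
  exact adjoin_le_iff.2 fun _ ⟨i, j, hij⟩ => hij ▸ hσK i j

theorem entryField_ge_of_surjective
    (g h : ℕ) (hg : 1 ≤ g) (hh : 1 ≤ h)
    (τ : Matrix (Fin g) (Fin g) ℂ) (σ : Matrix (Fin h) (Fin h) ℂ)
    (hτ : (τ.map Complex.im).det ≠ 0) (hσ : (σ.map Complex.im).det ≠ 0)
    (M : Matrix (Fin h) (Fin g) ℂ) (R : Matrix (Fin h ⊕ Fin h) (Fin g ⊕ Fin g) ℤ)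
    (hMR : M * PeriodMatrix g τ = PeriodMatrix h σ * R.map (Int.cast : ℤ → ℂ))
    (hsurj : Function.Surjective M.mulVecLin) :
    EntryField h σ ≤ EntryField g τ :=
  entryField_ge_of_surjective_general g h τ σ hτ hσ M R hMR hsurj

end
end

section
/- Let l ≤ r be natural numbers with r ≥ 1, let n_1, …, n_l be integers with n_j ≥ 2, and let k_1, …, k_r be integers with k_j ≥ 1. Set g := Σ_{j=1}^{l} n_j k_j + Σ_{j=l+1}^{r} k_j. Then equality 2·Σ_{j=1}^{l} n_j k_j² + Σ_{j=l+1}^{r} k_j² = g² holds if and only if either (l = 1, n_1 = 2 and r = 1, so the second sum is empty and g = 2k_1) or (l = 0 and r = 1, so g = k_1). -/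
open Matrix Module IntermediateField
open scoped ComplexOrder

noncomputable section

theorem sum_sq_equality_characterization
    (l r : ℕ) (hlr : l ≤ r) (hr : 1 ≤ r) (n k : ℕ → ℤ)
    (hn : ∀ j ∈ Finset.Icc 1 l, 2 ≤ n j) (hk : ∀ j ∈ Finset.Icc 1 r, 1 ≤ k j)
    (g : ℤ)
    (hg : g = ∑ j ∈ Finset.Icc 1 l, n j * k j + ∑ j ∈ Finset.Icc (l + 1) r, k j) :
    (2 * ∑ j ∈ Finset.Icc 1 l, n j * k j ^ 2 + ∑ j ∈ Finset.Icc (l + 1) r, k j ^ 2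
        = g ^ 2)
      ↔ ((l = 1 ∧ n 1 = 2 ∧ r = 1) ∨ (l = 0 ∧ r = 1)) := by
  have hmem1 : ∀ j ∈ Finset.Icc 1 l, j ∈ Finset.Icc 1 r := by
    intro j hj
    simp only [Finset.mem_Icc] at hj ⊢
    omega
  have hmem2 : ∀ j ∈ Finset.Icc (l+1) r, j ∈ Finset.Icc 1 r := by
    intro j hj
    simp only [Finset.mem_Icc] at hj ⊢
    omega
  have hA0 : ∀ j ∈ Finset.Icc 1 l, (0:ℤ) ≤ n j * k j := by
    intro j hj
    have h1 := hn j hj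
    have h2 := hk j (hmem1 j hj)
    nlinarith
  have hB0 : ∀ j ∈ Finset.Icc (l+1) r, (0:ℤ) ≤ k j := by
    intro j hj
    have := hk j (hmem2 j hj)
    linarith
  have hAnn : (0:ℤ) ≤ ∑ j ∈ Finset.Icc 1 l, n j * k j := Finset.sum_nonneg hA0
  have hBnn : (0:ℤ) ≤ ∑ j ∈ Finset.Icc (l+1) r, k j := Finset.sum_nonneg hB0
  have hgA : ∀ j ∈ Finset.Icc 1 l, n j * k j ≤ g := by
    intro j hj
    have := Finset.single_le_sum hA0 hj
    linarith [hg]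
  have hgB : ∀ j ∈ Finset.Icc (l+1) r, k j ≤ g := by
    intro j hj
    have := Finset.single_le_sum hB0 hj
    linarith [hg]
  constructor
  · intro h
    have key : ∑ j ∈ Finset.Icc 1 l, n j * k j * (g - 2 * k j)
        + ∑ j ∈ Finset.Icc (l+1) r, k j * (g - k j) = 0 := by
      have e1 : ∑ j ∈ Finset.Icc 1 l, n j * k j * (g - 2 * k j)
          = (∑ j ∈ Finset.Icc 1 l, n j * k j) * g
            - 2 * ∑ j ∈ Finset.Icc 1 l, n j * k j ^ 2 := by
        rw [Finset.sum_mul, Finset.mul_sum, ← Finset.sum_sub_distrib]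
        exact Finset.sum_congr rfl fun j _ => by ring
      have e2 : ∑ j ∈ Finset.Icc (l+1) r, k j * (g - k j)
          = (∑ j ∈ Finset.Icc (l+1) r, k j) * g
            - ∑ j ∈ Finset.Icc (l+1) r, k j ^ 2 := by
        rw [Finset.sum_mul, ← Finset.sum_sub_distrib]
        exact Finset.sum_congr rfl fun j _ => by ring
      rw [e1, e2]
      nlinarith [hg, h]
    have ht1nn : ∀ j ∈ Finset.Icc 1 l, (0:ℤ) ≤ n j * k j * (g - 2 * k j) := by
      intro j hj
      have h1 := hn j hj
      have h2 := hk j (hmem1 j hj)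
      have h3 := hgA j hj
      have h4 : 2 * k j ≤ n j * k j := by nlinarith
      exact mul_nonneg (by nlinarith) (by linarith)
    have ht2nn : ∀ j ∈ Finset.Icc (l+1) r, (0:ℤ) ≤ k j * (g - k j) := by
      intro j hj
      have h2 := hk j (hmem2 j hj)
      have h3 := hgB j hj
      nlinarith
    have hs1 : ∑ j ∈ Finset.Icc 1 l, n j * k j * (g - 2 * k j) = 0 := by
      have := Finset.sum_nonneg ht1nn
      have := Finset.sum_nonneg ht2nn
      linarith
    have hs2 : ∑ j ∈ Finset.Icc (l+1) r, k j * (g - k j) = 0 := by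
      have := Finset.sum_nonneg ht1nn
      have := Finset.sum_nonneg ht2nn
      linarith
    have hterm1 : ∀ j ∈ Finset.Icc 1 l, g = 2 * k j := by
      intro j hj
      have hz := (Finset.sum_eq_zero_iff_of_nonneg ht1nn).mp hs1 j hj
      have h1 := hn j hj
      have h2 := hk j (hmem1 j hj)
      have hpos : 0 < n j * k j := by nlinarith
      have := mul_eq_zero.mp hz
      rcases this with h' | h'
      · exact absurd h' (by linarith)
      · linarith
    have hterm2 : ∀ j ∈ Finset.Icc (l+1) r, g = k j := by
      intro j hj
      have hz := (Finset.sum_eq_zero_iff_of_nonneg ht2nn).mp hs2 j hj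
      have h2 := hk j (hmem2 j hj)
      have := mul_eq_zero.mp hz
      rcases this with h' | h'
      · exact absurd h' (by linarith)
      · linarith
    rcases Nat.eq_zero_or_pos l with hl0 | hl1
    · right
      refine ⟨hl0, ?_⟩
      subst hl0
      have h1 : g = k 1 := hterm2 1 (by simp [Finset.mem_Icc]; omega)
      have hk1 : 1 ≤ k 1 := hk 1 (by simp [Finset.mem_Icc]; omega)
      by_contra hr1
      have hr2 : 2 ≤ r := by omega
      have h2 : g = k 2 := hterm2 2 (by simp [Finset.mem_Icc]; omega)
      have hsub : ({1, 2} : Finset ℕ) ⊆ Finset.Icc (0+1) r := by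
        intro x hx
        simp only [Finset.mem_insert, Finset.mem_singleton] at hx
        simp only [Finset.mem_Icc]
        omega
      have h12 : k 1 + k 2 ≤ ∑ j ∈ Finset.Icc (0+1) r, k j := by
        have := Finset.sum_le_sum_of_subset_of_nonneg hsub (fun i hi _ => hB0 i hi)
        simpa using this
      have hAe : ∑ j ∈ Finset.Icc 1 0, n j * k j = 0 := by simp
      rw [hAe] at hg
      linarith
    · have h1 : g = 2 * k 1 := hterm1 1 (by simp [Finset.mem_Icc]; omega)
      have hk1 : 1 ≤ k 1 := hk 1 (by simp [Finset.mem_Icc]; omega)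
      have hn1 : 2 ≤ n 1 := hn 1 (by simp [Finset.mem_Icc]; omega)
      have h1A : n 1 * k 1 ≤ ∑ j ∈ Finset.Icc 1 l, n j * k j :=
        Finset.single_le_sum hA0 (by simp [Finset.mem_Icc]; omega)
      have hrl : r = l := by
        by_contra hne
        have hlt : l + 1 ≤ r := by omega
        have h2 : g = k (l+1) := hterm2 (l+1) (by simp [Finset.mem_Icc]; omega)
        have h2B : k (l+1) ≤ ∑ j ∈ Finset.Icc (l+1) r, k j :=
          Finset.single_le_sum hB0 (by simp [Finset.mem_Icc]; omega)
        nlinarith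
      have hBe : ∑ j ∈ Finset.Icc (l+1) r, k j = 0 := by
        rw [hrl]
        simp
      have hl1' : l = 1 := by
        by_contra hne
        have hl2 : 2 ≤ l := by omega
        have h2 : g = 2 * k 2 := hterm1 2 (by simp [Finset.mem_Icc]; omega)
        have hk2 : 1 ≤ k 2 := hk 2 (by simp [Finset.mem_Icc]; omega)
        have hn2 : 2 ≤ n 2 := hn 2 (by simp [Finset.mem_Icc]; omega)
        have hsub : ({1, 2} : Finset ℕ) ⊆ Finset.Icc 1 l := by
          intro x hx
          simp only [Finset.mem_insert, Finset.mem_singleton] at hx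
          simp only [Finset.mem_Icc]
          omega
        have h12 : n 1 * k 1 + n 2 * k 2 ≤ ∑ j ∈ Finset.Icc 1 l, n j * k j := by
          have := Finset.sum_le_sum_of_subset_of_nonneg hsub (fun i hi _ => hA0 i hi)
          simpa using this
        nlinarith
      left
      refine ⟨hl1', ?_, by omega⟩
      subst hl1'
      have hge : g = n 1 * k 1 := by
        rw [hg, hBe]
        simp
      have hz : (n 1 - 2) * k 1 = 0 := by nlinarith
      rcases mul_eq_zero.mp hz with h' | h'
      · linarith
      · linarith
  · rintro (⟨hl, hn1, hr1⟩ | ⟨hl, hr1⟩)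
    · subst hl; subst hr1
      simp only [Finset.Icc_self, Finset.sum_singleton] at hg ⊢
      rw [Finset.Icc_eq_empty (by omega), Finset.sum_empty] at hg ⊢
      rw [hg, hn1]
      ring
    · subst hl; subst hr1
      rw [Finset.Icc_eq_empty (by omega), Finset.sum_empty] at hg ⊢
      simp only [Finset.Icc_self, Finset.sum_singleton] at hg ⊢
      rw [hg]
      ring

end
end
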